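/- arXiv:2301.11306 — 6 statements merged into one kernel-verified Lean document; each statement's English description precedes it below -/
import Mathlib

section
/- Let X = {x_0, x_1, …, x_k} ⊆ F_q^d. Suppose that for every choice of scalars c_0, …, c_k ∈ F_q with Σ_i c_i = 0 and Σ_i c_i x_i = 0 one has Σ_i c_i |x_i|² = 0. Then X is spherical, i.e., there exist z ∈ F_q^d and r ∈ F_q with |x_i − z|² = r for all i. -/
open Matrix

/-- The linear functional `c ↦ ∑ i, c i * v i`. -/
def dotForm {F : Type*} [Field F] {n : ℕ} (v : Fin n → F) : (Fin n → F) →ₗ[F] F where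
  toFun c := ∑ i, c i * v i
  map_add' a b := by simp [add_mul, Finset.sum_add_distrib]
  map_smul' r a := by simp [Finset.mul_sum, mul_assoc]

/-- If every affine dependence `Σ c_i = 0`, `Σ c_i x_i = 0` among `x_0,…,x_k ⊆ F_q^d`
forces `Σ c_i |x_i|² = 0`, then the set is spherical: it lies on some sphere `S_r(z)`. -/
theorem stmt3 {F : Type*} [Field F] [Fintype F] (hodd : ringChar F ≠ 2) {d k : ℕ}
    (x : Fin (k + 1) → (Fin d → F))
    (h : ∀ c : Fin (k + 1) → F, ∑ i, c i = 0 → ∑ i, c i • x i = 0 →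
      ∑ i, c i * dotProduct (x i) (x i) = 0) :
    ∃ (z : Fin d → F) (r : F), ∀ i, dotProduct (x i - z) (x i - z) = r := by
  have h2 : (2 : F) ≠ 0 := Ring.two_ne_zero hodd
  -- the family of linear forms: the sum form and the coordinate forms
  set L : Option (Fin d) → (Fin (k + 1) → F) →ₗ[F] F :=
    fun o => Option.elim o (dotForm fun _ => 1) (fun j => dotForm fun i => x i j) with hL
  set K : (Fin (k + 1) → F) →ₗ[F] F := dotForm fun i => dotProduct (x i) (x i) with hK
  have hker : ⨅ o, LinearMap.ker (L o) ≤ LinearMap.ker K := by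
    intro c hc
    simp only [Submodule.mem_iInf, LinearMap.mem_ker] at hc
    have h0 := hc none
    have h1 := fun j => hc (some j)
    simp only [hL, Option.elim, dotForm, LinearMap.coe_mk, AddHom.coe_mk, mul_one] at h0 h1
    have hx : ∑ i, c i • x i = 0 := by
      funext j
      have := h1 j
      simpa [Finset.sum_apply] using this
    simpa [hK, dotForm] using h c h0 hx
  obtain ⟨w, hw⟩ := (Submodule.mem_span_range_iff_exists_fun F).1 (mem_span_of_iInf_ker_le_ker hker)
  -- evaluate at basis vectors
  have key : ∀ i, dotProduct (x i) (x i) =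
      w none + ∑ j, w (some j) * x i j := by
    intro i
    have := LinearMap.congr_fun hw (Pi.single i 1)
    simp only [LinearMap.coe_sum, Finset.sum_apply, LinearMap.smul_apply,
      smul_eq_mul] at this
    rw [Fintype.sum_option] at this
    simp only [hL, hK, Option.elim, dotForm, LinearMap.coe_mk, AddHom.coe_mk] at this
    simpa [Pi.single_apply, Finset.mul_sum, mul_comm] using this.symm
  refine ⟨(2 : F)⁻¹ • fun j => w (some j), w none +
      dotProduct ((2 : F)⁻¹ • fun j => w (some j)) ((2 : F)⁻¹ • fun j => w (some j)), fun i => ?_⟩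
  set z : Fin d → F := (2 : F)⁻¹ • fun j => w (some j) with hz
  have hwx : dotProduct (fun j => w (some j)) (x i) = ∑ j, w (some j) * x i j := rfl
  have expand : dotProduct (x i - z) (x i - z) =
      dotProduct (x i) (x i) - 2 * ((2:F)⁻¹ * dotProduct (fun j => w (some j)) (x i))
        + dotProduct z z := by
    rw [sub_dotProduct, dotProduct_sub, dotProduct_sub]
    have hzx : dotProduct z (x i) = (2:F)⁻¹ * dotProduct (fun j => w (some j)) (x i) := by
      rw [hz, smul_dotProduct]; rfl
    have hxz : dotProduct (x i) z = (2:F)⁻¹ * dotProduct (fun j => w (some j)) (x i) := by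
      rw [dotProduct_comm]; exact hzx
    rw [hzx, hxz]; ring
  rw [expand, key i, hwx]
  field_simp
  ring
end

section
/- Let X ⊆ F_q^d be a non-spherical set with k+1 points. Then there exist scalars c_0, …, c_k ∈ F_q, not all zero, with Σ_i c_i = 0, Σ_i c_i x_i = 0, and Σ_i c_i |x_i|² ≠ 0. -/
open Matrix

/-- If `X = {x_0,…,x_k} ⊆ F_q^d` is non-spherical, then there are scalars `c_i`, not all
zero, with `Σ c_i = 0`, `Σ c_i x_i = 0` and `Σ c_i |x_i|² ≠ 0`. -/
theorem stmt4 {F : Type*} [Field F] [Fintype F] (hodd : ringChar F ≠ 2) {d k : ℕ}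
    (x : Fin (k + 1) → (Fin d → F))
    (hns : ¬ ∃ (z : Fin d → F) (r : F), ∀ i, dotProduct (x i - z) (x i - z) = r) :
    ∃ c : Fin (k + 1) → F, c ≠ 0 ∧ ∑ i, c i = 0 ∧ ∑ i, c i • x i = 0 ∧
      ∑ i, c i * dotProduct (x i) (x i) ≠ 0 := by
  have h2 : (2 : F) ≠ 0 := Ring.two_ne_zero hodd
  set y : Fin (k + 1) → F := fun i => dotProduct (x i) (x i) with hy
  set g : (Unit ⊕ Fin d) → (Fin (k + 1) → F) :=
    Sum.elim (fun _ => fun _ => 1) (fun j => fun i => x i j) with hg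
  set W : Submodule F (Fin (k + 1) → F) := Submodule.span F (Set.range g) with hW
  -- y ∉ W, else the set would be spherical
  have hyW : y ∉ W := by
    intro hmem
    rw [hW, Finsupp.mem_span_range_iff_exists_finsupp] at hmem
    obtain ⟨c, hc⟩ := hmem
    set s : F := c (Sum.inl ()) with hs
    set w : Fin d → F := fun j => c (Sum.inr j) with hw
    have hci : ∀ i, s + dotProduct w (x i) = y i := by
      intro i
      have := congrFun hc i
      rw [Finsupp.sum_fintype] at this
      · rw [Fintype.sum_sum_type] at this
        simpa [hg, dotProduct, mul_comm] using this
      · intro a; simp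
    apply hns
    refine ⟨(2:F)⁻¹ • w, s + dotProduct ((2:F)⁻¹ • w) ((2:F)⁻¹ • w), fun i => ?_⟩
    set z : Fin d → F := (2:F)⁻¹ • w with hz
    have hdz : dotProduct z (x i) = (2:F)⁻¹ * dotProduct w (x i) := by
      simp [hz, smul_dotProduct]
    have expand : dotProduct (x i - z) (x i - z)
        = y i - 2 * dotProduct z (x i) + dotProduct z z := by
      simp [sub_dotProduct, dotProduct_sub, hy, dotProduct_comm (x i) z]
      ring
    rw [expand, hdz, ← hci i]
    field_simp
    ring
  obtain ⟨f, hfy, hfW⟩ := W.exists_dual_map_eq_bot_of_notMem hyW inferInstance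
  have hf0 : ∀ v ∈ W, f v = 0 := by
    intro v hv
    have : f v ∈ W.map f := Submodule.mem_map_of_mem hv
    rwa [hfW, Submodule.mem_bot] at this
  set c : Fin (k + 1) → F := fun i => f (Pi.single i 1) with hcdef
  have key : ∀ v : Fin (k + 1) → F, f v = ∑ i, v i * c i := by
    intro v
    have hv : v = ∑ i, v i • (Pi.single i 1 : Fin (k+1) → F) := by
      conv_lhs => rw [← Finset.univ_sum_single v]
      congr 1; funext i
      simp [Pi.single_apply, funext_iff, smul_ite]
    calc f v = f (∑ i, v i • (Pi.single i 1 : Fin (k+1) → F)) := by rw [← hv]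
    _ = ∑ i, v i * c i := by
        rw [map_sum]; exact Finset.sum_congr rfl fun i _ => by rw [_root_.map_smul]; rfl
  have hgW : ∀ a, g a ∈ W := fun a => Submodule.subset_span ⟨a, rfl⟩
  refine ⟨c, ?_, ?_, ?_, ?_⟩
  · intro hc0
    apply hfy
    rw [key y, hc0]
    simp
  · have := hf0 _ (hgW (Sum.inl ()))
    rw [key] at this
    simpa [hg] using this
  · funext j
    have := hf0 _ (hgW (Sum.inr j))
    rw [key] at this
    simp only [hg, Sum.elim_inr] at this
    simpa [Finset.sum_apply, mul_comm] using this
  · intro h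
    apply hfy
    rw [key y]
    rw [← h]
    exact Finset.sum_congr rfl fun i _ => mul_comm _ _
end

section
/- Let B(Γ,ρ) ⊆ F_q^d be a regular Bohr set, ε ∈ (0,1), and let B' = B(Γ',ρ') be another regular Bohr set with Γ' ⊇ Γ and ρ' ≤ ερ/(200|Γ|). Then for every function f : F_q^d → ℂ with |f| ≤ 1 and every y ∈ B', |E_{x∈B} f(x) − E_{x∈B} f(x+y)| ≤ ε. -/
open Matrix

open scoped Classical in
/-- The Bohr set `B(Γ,ρ)` in `F_q^d` with respect to the additive character `χ`. -/
noncomputable def bohr {F : Type*} [Field F] [Fintype F] {d : ℕ}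
    (χ : AddChar F ℂ) (Γ : Finset (Fin d → F)) (ρ : ℝ) : Finset (Fin d → F) :=
  Finset.univ.filter fun x => ∀ ξ ∈ Γ, ‖(χ (dotProduct ξ x) - 1)‖ ≤ ρ

/-- Regularity of a Bohr set, in the sense of Bourgain. -/
def BohrRegular {F : Type*} [Field F] [Fintype F] {d : ℕ}
    (χ : AddChar F ℂ) (Γ : Finset (Fin d → F)) (ρ : ℝ) : Prop :=
  ∀ ε : ℝ, 0 < ε →
    ((bohr χ Γ ((1 + ε) * ρ)).card : ℝ) ≤ (1 + 100 * ε * Γ.card) * (bohr χ Γ ρ).card ∧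
    (1 - 100 * ε * Γ.card) * ((bohr χ Γ ρ).card : ℝ) ≤ ((bohr χ Γ ((1 - ε) * ρ)).card : ℝ)

lemma mem_bohr_iff {F : Type*} [Field F] [Fintype F] {d : ℕ}
    (χ : AddChar F ℂ) (Γ : Finset (Fin d → F)) (ρ : ℝ) (x : Fin d → F) :
    x ∈ bohr χ Γ ρ ↔ ∀ ξ ∈ Γ, ‖(χ (dotProduct ξ x) - 1)‖ ≤ ρ := by
  classical
  simp [bohr]

lemma abs_char_add_sub_one {F : Type*} [Field F] [Fintype F]
    (χ : AddChar F ℂ) (a b : F) :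
    ‖χ (a + b) - 1‖ ≤ ‖χ a - 1‖ + ‖χ b - 1‖ := by
  have h1 : χ (a + b) - 1 = χ a * (χ b - 1) + (χ a - 1) := by
    rw [AddChar.map_add_eq_mul]; ring
  rw [h1]
  refine (norm_add_le _ _).trans ?_
  rw [norm_mul]
  have : ‖χ a‖ = 1 := χ.norm_apply a
  rw [this, one_mul]
  linarith

lemma abs_char_neg_sub_one {F : Type*} [Field F] [Fintype F]
    (χ : AddChar F ℂ) (a : F) :
    ‖χ (-a) - 1‖ = ‖χ a - 1‖ := by
  have h1 : χ (-a) - 1 = χ (-a) * (1 - χ a) := by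
    rw [mul_sub, mul_one, ← AddChar.map_add_eq_mul, neg_add_cancel, AddChar.map_zero_eq_one]
  have h2 : ‖χ (-a)‖ = 1 := χ.norm_apply (-a)
  rw [h1, norm_mul, h2, one_mul, norm_sub_rev]

/-- For a regular Bohr set `B = B(Γ,ρ)` and `B' = B(Γ',ρ') ≺_ε B`, averages over `B` of a
`1`-bounded function are stable under translation by any `y ∈ B'`. -/
theorem stmt10 {F : Type*} [Field F] [Fintype F] {d : ℕ}
    (χ : AddChar F ℂ) (Γ Γ' : Finset (Fin d → F)) (ρ ρ' ε : ℝ)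
    (hε0 : 0 < ε) (hε1 : ε < 1) (hρ0 : 0 < ρ) (hρ1 : ρ ≤ 1)
    (hreg : BohrRegular χ Γ ρ)
    (hΓ : Γ ⊆ Γ') (hρ'0 : 0 < ρ') (hρ' : ρ' ≤ ε * ρ / (200 * Γ.card))
    (hreg' : BohrRegular χ Γ' ρ')
    (f : (Fin d → F) → ℂ) (hf : ∀ x, ‖(f x)‖ ≤ 1)
    (y : Fin d → F) (hy : y ∈ bohr χ Γ' ρ') :
    ‖(((bohr χ Γ ρ).card : ℂ)⁻¹ * ∑ x ∈ bohr χ Γ ρ, f x -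
        ((bohr χ Γ ρ).card : ℂ)⁻¹ * ∑ x ∈ bohr χ Γ ρ, f (x + y))‖ ≤ ε := by
  classical
  -- Γ is nonempty
  have hk : (0 : ℝ) < Γ.card := by
    by_contra h
    push_neg at h
    have : (Γ.card : ℝ) = 0 := le_antisymm h (by positivity)
    rw [this] at hρ'
    simp at hρ'
    linarith
  set k : ℝ := (Γ.card : ℝ) with hkdef
  set ε' : ℝ := ε / (200 * k) with hε'def
  have hε'0 : 0 < ε' := by positivity
  have hρ'ε : ρ' ≤ ε' * ρ := by
    rw [hε'def]
    calc ρ' ≤ ε * ρ / (200 * k) := hρ'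
    _ = ε / (200 * k) * ρ := by ring
  -- y is in the small Bohr set for Γ
  have hyΓ : ∀ ξ ∈ Γ, ‖(χ (dotProduct ξ y) - 1)‖ ≤ ρ' := fun ξ hξ =>
    (mem_bohr_iff χ Γ' ρ' y).1 hy ξ (hΓ hξ)
  set B := bohr χ Γ ρ with hB
  set Bp := bohr χ Γ ((1 + ε') * ρ) with hBp
  set Bm := bohr χ Γ ((1 - ε') * ρ) with hBm
  set C := B.image (· + y) with hC
  -- containments
  have hBsubBp : B ⊆ Bp := fun x hx => by
    rw [mem_bohr_iff] at hx ⊢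
    intro ξ hξ
    exact (hx ξ hξ).trans (by nlinarith)
  have hCsubBp : C ⊆ Bp := by
    intro z hz
    rw [hC, Finset.mem_image] at hz
    obtain ⟨x, hx, rfl⟩ := hz
    rw [mem_bohr_iff] at hx ⊢
    intro ξ hξ
    rw [dotProduct_add]
    refine (abs_char_add_sub_one χ _ _).trans ?_
    have := hx ξ hξ
    have := hyΓ ξ hξ
    nlinarith
  have hBmsubB : Bm ⊆ B := fun x hx => by
    rw [mem_bohr_iff] at hx ⊢
    intro ξ hξ
    exact (hx ξ hξ).trans (by nlinarith)
  have hBmsubC : Bm ⊆ C := by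
    intro z hz
    rw [hC, Finset.mem_image]
    refine ⟨z - y, ?_, by simp⟩
    rw [mem_bohr_iff] at hz ⊢
    intro ξ hξ
    have h1 : dotProduct ξ (z - y) = dotProduct ξ z + -(dotProduct ξ y) := by
      rw [sub_eq_add_neg, dotProduct_add, dotProduct_neg]
    rw [h1]
    refine (abs_char_add_sub_one χ _ _).trans ?_
    rw [abs_char_neg_sub_one]
    have := hz ξ hξ
    have := hyΓ ξ hξ
    nlinarith
  -- cardinality bounds from regularity
  obtain ⟨hcard1, hcard2⟩ := hreg ε' hε'0
  have hkey : (Bp.card : ℝ) - Bm.card ≤ ε * B.card := by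
    have h200 : 1 + 100 * ε' * k - (1 - 100 * ε' * k) = ε := by
      field_simp [hε'def]
      rw [hε'def]
      field_simp [hk.ne']
      ring
    nlinarith [hcard1, hcard2, (Nat.cast_nonneg B.card : (0:ℝ) ≤ B.card)]
  -- B is nonempty
  have h0B : (0 : Fin d → F) ∈ B := by
    rw [hB, mem_bohr_iff]
    intro ξ hξ
    simp [dotProduct]
    linarith
  have hBpos : (0 : ℝ) < B.card := by
    have := Finset.card_pos.2 ⟨0, h0B⟩
    exact_mod_cast this
  -- rewrite translated sum as sum over C
  have hsum : ∑ x ∈ B, f (x + y) = ∑ z ∈ C, f z := by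
    rw [hC, Finset.sum_image]
    intro a _ b _ hab
    simpa using congrArg (· - y) hab
  have hCcard : C.card = B.card := Finset.card_image_of_injective _ (add_left_injective y)
  -- main estimate on sums
  have hmain : ‖∑ x ∈ B, f x - ∑ z ∈ C, f z‖ ≤ (Bp.card : ℝ) - Bm.card := by
    have hsplitB : ∑ x ∈ B, f x = ∑ x ∈ B \ (B ∩ C), f x + ∑ x ∈ B ∩ C, f x :=
      (Finset.sum_sdiff (Finset.inter_subset_left)).symm
    have hsplitC : ∑ x ∈ C, f x = ∑ x ∈ C \ (B ∩ C), f x + ∑ x ∈ B ∩ C, f x :=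
      (Finset.sum_sdiff (Finset.inter_subset_right)).symm
    have hdiff : ∑ x ∈ B, f x - ∑ z ∈ C, f z
        = ∑ x ∈ B \ (B ∩ C), f x - ∑ x ∈ C \ (B ∩ C), f x := by
      rw [hsplitB, hsplitC]; ring
    rw [hdiff]
    refine (norm_sub_le _ _).trans ?_
    have habs1 : ‖∑ x ∈ B \ (B ∩ C), f x‖ ≤ ((B \ (B ∩ C)).card : ℝ) := by
      refine (norm_sum_le _ _).trans ?_
      calc ∑ x ∈ B \ (B ∩ C), ‖f x‖ ≤ ∑ _x ∈ B \ (B ∩ C), (1 : ℝ) :=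
            Finset.sum_le_sum fun x _ => hf x
        _ = ((B \ (B ∩ C)).card : ℝ) := by simp
    have habs2 : ‖∑ x ∈ C \ (B ∩ C), f x‖ ≤ ((C \ (B ∩ C)).card : ℝ) := by
      refine (norm_sum_le _ _).trans ?_
      calc ∑ x ∈ C \ (B ∩ C), ‖f x‖ ≤ ∑ _x ∈ C \ (B ∩ C), (1 : ℝ) :=
            Finset.sum_le_sum fun x _ => hf x
        _ = ((C \ (B ∩ C)).card : ℝ) := by simp
    have hc1 : ((B \ (B ∩ C)).card : ℝ) = (B.card : ℝ) - (B ∩ C).card := by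
      rw [Finset.card_sdiff_of_subset Finset.inter_subset_left]
      have := Finset.card_le_card (Finset.inter_subset_left : B ∩ C ⊆ B)
      push_cast [Nat.cast_sub this]
      ring
    have hc2 : ((C \ (B ∩ C)).card : ℝ) = (C.card : ℝ) - (B ∩ C).card := by
      rw [Finset.card_sdiff_of_subset Finset.inter_subset_right]
      have := Finset.card_le_card (Finset.inter_subset_right : B ∩ C ⊆ C)
      push_cast [Nat.cast_sub this]
      ring
    have hBmBC : (Bm.card : ℝ) ≤ ((B ∩ C).card : ℝ) := by
      exact_mod_cast Finset.card_le_card (Finset.subset_inter hBmsubB hBmsubC)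
    have hBBp : (B.card : ℝ) ≤ Bp.card := by
      exact_mod_cast Finset.card_le_card hBsubBp
    have hCBp : (C.card : ℝ) ≤ Bp.card := by
      exact_mod_cast Finset.card_le_card hCsubBp
    have hCB : (C.card : ℝ) = B.card := by exact_mod_cast hCcard
    have hunion : ((B ∪ C).card : ℝ) + ((B ∩ C).card : ℝ) = (B.card : ℝ) + C.card := by
      exact_mod_cast Finset.card_union_add_card_inter B C
    have hU : ((B ∪ C).card : ℝ) ≤ Bp.card := by
      exact_mod_cast Finset.card_le_card (Finset.union_subset hBsubBp hCsubBp)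
    calc ‖∑ x ∈ B \ (B ∩ C), f x‖ + ‖∑ x ∈ C \ (B ∩ C), f x‖
        ≤ ((B \ (B ∩ C)).card : ℝ) + ((C \ (B ∩ C)).card : ℝ) := add_le_add habs1 habs2
      _ = ((B.card : ℝ) - (B ∩ C).card) + ((C.card : ℝ) - (B ∩ C).card) := by rw [hc1, hc2]
      _ ≤ (Bp.card : ℝ) - Bm.card := by linarith
  -- conclude
  rw [hsum, ← mul_sub, norm_mul, norm_inv, Complex.norm_natCast]
  rw [inv_mul_le_iff₀ hBpos]
  calc ‖∑ x ∈ B, f x - ∑ z ∈ C, f z‖ ≤ (Bp.card : ℝ) - Bm.card := hmain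
    _ ≤ ε * B.card := hkey
    _ = (B.card : ℝ) * ε := by ring
end

section
/- Let d ≥ 2, λ ∈ F_q^*, and σ = q·1_{S_λ} where S_λ = {x ∈ F_q^d : |x|² = λ}. Suppose the Fourier bound |σ̂(ξ)| = 1_{ξ=0} + O(q^{−1/2}) holds. Let B ⊆ F_q^d with density β = |B|/q^d and μ_B = β^{−1}1_B. Then for every x ∈ F_q^d, μ_B * μ_B * σ(x) = 1 + O(β^{−1} q^{−1/2}), where f*g(x) = E_y f(y)g(x−y). -/
open Matrix

/-- Normalized Fourier transform on `F_q^d`. -/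
noncomputable def fhat {F : Type*} [Field F] [Fintype F] {d : ℕ}
    (χ : AddChar F ℂ) (g : (Fin d → F) → ℂ) (ξ : Fin d → F) : ℂ :=
  (Fintype.card (Fin d → F) : ℂ)⁻¹ * ∑ x, g x * χ (-(dotProduct ξ x))

/-- Normalized convolution `f * g (x) = E_y f(y) g(x − y)` on `F_q^d`. -/
noncomputable def conv {F : Type*} [Field F] [Fintype F] {d : ℕ}
    (f g : (Fin d → F) → ℂ) (x : Fin d → F) : ℂ :=
  (Fintype.card (Fin d → F) : ℂ)⁻¹ * ∑ y, f y * g (x - y)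

section helpers
open Finset
variable {F : Type*} [Field F] [Fintype F] [DecidableEq F] {d : ℕ}

lemma char_orth (χ : AddChar F ℂ) (hχ : χ ≠ 1) (a : Fin d → F) :
    ∑ ξ : Fin d → F, χ (dotProduct ξ a)
      = if a = 0 then (Fintype.card (Fin d → F) : ℂ) else 0 := by
  have hprim : χ.IsPrimitive := AddChar.IsPrimitive.of_ne_one hχ
  have h1 : ∑ ξ : Fin d → F, χ (dotProduct ξ a) = ∑ ξ : Fin d → F, ∏ i, χ (ξ i * a i) := by
    refine Finset.sum_congr rfl fun ξ _ => ?_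
    rw [dotProduct]
    induction (Finset.univ : Finset (Fin d)) using Finset.cons_induction with
    | empty => simp
    | cons i s hi ih => rw [Finset.sum_cons, Finset.prod_cons, AddChar.map_add_eq_mul, ih]
  rw [h1, ← Fintype.prod_sum (fun (i : Fin d) (t : F) => χ (t * a i))]
  have h2 : ∀ i : Fin d, ∑ t : F, χ (t * a i) = if a i = 0 then (Fintype.card F : ℂ) else 0 :=
    fun i => by rw [AddChar.sum_mulShift _ hprim]; split <;> simp
  rw [Fintype.prod_congr _ _ h2]
  by_cases ha : a = 0
  · simp [ha, Fintype.card_fun]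
  · obtain ⟨i, hi⟩ : ∃ i, a i ≠ 0 := by
      by_contra h
      push_neg at h
      exact ha (funext h)
    rw [if_neg ha]
    exact Finset.prod_eq_zero (Finset.mem_univ i) (by simp [hi])

lemma fhat_conv (χ : AddChar F ℂ) (f g : (Fin d → F) → ℂ) (ξ : Fin d → F) :
    fhat χ (conv f g) ξ = fhat χ f ξ * fhat χ g ξ := by
  set N : ℂ := (Fintype.card (Fin d → F) : ℂ) with hN
  have key : ∀ x y : Fin d → F, f y * g (x - y) * χ (-(dotProduct ξ x))
      = (f y * χ (-(dotProduct ξ y))) * (g (x - y) * χ (-(dotProduct ξ (x - y)))) := by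
    intro x y
    have h : -(dotProduct ξ x) = -(dotProduct ξ y) + -(dotProduct ξ (x - y)) := by
      rw [dotProduct_sub]; ring
    rw [h, AddChar.map_add_eq_mul]; ring
  have hre : ∀ y : Fin d → F, ∑ x, g (x - y) * χ (-(dotProduct ξ (x - y)))
      = ∑ z, g z * χ (-(dotProduct ξ z)) := fun y =>
    Fintype.sum_equiv (Equiv.subRight y) _ _ (fun x => rfl)
  simp only [fhat, conv, ← hN]
  calc N⁻¹ * ∑ x, (N⁻¹ * ∑ y, f y * g (x - y)) * χ (-(dotProduct ξ x))
      = N⁻¹ * ∑ x, N⁻¹ * ∑ y, f y * g (x - y) * χ (-(dotProduct ξ x)) := by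
        refine congrArg _ (Finset.sum_congr rfl fun x _ => ?_)
        rw [mul_assoc, Finset.sum_mul]
    _ = N⁻¹ * (N⁻¹ * ∑ x, ∑ y, f y * g (x - y) * χ (-(dotProduct ξ x))) := by
        rw [← Finset.mul_sum]
    _ = N⁻¹ * (N⁻¹ * ∑ y, ∑ x,
          (f y * χ (-(dotProduct ξ y))) * (g (x - y) * χ (-(dotProduct ξ (x - y))))) := by
        rw [Finset.sum_comm]
        simp_rw [key]
    _ = N⁻¹ * (N⁻¹ * ∑ y, (f y * χ (-(dotProduct ξ y))) * ∑ z, g z * χ (-(dotProduct ξ z))) := by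
        congr 1
        refine congrArg _ (Finset.sum_congr rfl fun y _ => ?_)
        rw [← Finset.mul_sum, hre y]
    _ = (N⁻¹ * ∑ x, f x * χ (-(dotProduct ξ x))) * (N⁻¹ * ∑ x, g x * χ (-(dotProduct ξ x))) := by
        rw [← Finset.sum_mul]; ring

lemma fourier_inv (χ : AddChar F ℂ) (hχ : χ ≠ 1) (f : (Fin d → F) → ℂ) (x : Fin d → F) :
    ∑ ξ : Fin d → F, fhat χ f ξ * χ (dotProduct ξ x) = f x := by
  classical
  set N : ℂ := (Fintype.card (Fin d → F) : ℂ) with hN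
  have hN0 : N ≠ 0 := Nat.cast_ne_zero.mpr Fintype.card_ne_zero
  have key : ∀ ξ y : Fin d → F, (f y * χ (-(dotProduct ξ y))) * χ (dotProduct ξ x)
      = f y * χ (dotProduct ξ (x - y)) := by
    intro ξ y
    have h : dotProduct ξ (x - y) = -(dotProduct ξ y) + dotProduct ξ x := by
      rw [dotProduct_sub]; ring
    rw [h, AddChar.map_add_eq_mul]; ring
  simp only [fhat, ← hN]
  calc ∑ ξ : Fin d → F, (N⁻¹ * ∑ y, f y * χ (-(dotProduct ξ y))) * χ (dotProduct ξ x)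
      = N⁻¹ * ∑ ξ : Fin d → F, ∑ y, f y * χ (dotProduct ξ (x - y)) := by
        rw [Finset.mul_sum]
        refine Finset.sum_congr rfl fun ξ _ => ?_
        rw [mul_assoc, Finset.sum_mul]
        exact congrArg _ (Finset.sum_congr rfl fun y _ => key ξ y)
    _ = N⁻¹ * ∑ y, f y * ∑ ξ : Fin d → F, χ (dotProduct ξ (x - y)) := by
        rw [Finset.sum_comm]
        exact congrArg _ (Finset.sum_congr rfl fun y _ => (Finset.mul_sum _ _ _).symm)
    _ = N⁻¹ * ∑ y, f y * (if x - y = 0 then N else 0) := by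
        simp_rw [char_orth χ hχ]
        rfl
    _ = f x := by
        simp_rw [sub_eq_zero, mul_ite, mul_zero]
        rw [Finset.sum_ite_eq Finset.univ x (fun y => f y * N), if_pos (Finset.mem_univ x)]
        field_simp

lemma planch (χ : AddChar F ℂ) (hχ : χ ≠ 1) (f : (Fin d → F) → ℂ) :
    ∑ ξ : Fin d → F, fhat χ f ξ * (starRingEnd ℂ) (fhat χ f ξ)
      = (Fintype.card (Fin d → F) : ℂ)⁻¹ * ∑ x, f x * (starRingEnd ℂ) (f x) := by
  classical
  set N : ℂ := (Fintype.card (Fin d → F) : ℂ) with hN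
  have hN0 : N ≠ 0 := Nat.cast_ne_zero.mpr Fintype.card_ne_zero
  have hp : 0 < ringChar F :=
    Nat.pos_of_ne_zero (CharP.ringChar_ne_zero_of_finite F)
  have hconj : ∀ a : F, (starRingEnd ℂ) (χ a) = χ (-a) := fun a => by
    rw [AddChar.starComp_apply hp, AddChar.inv_apply]
  have hcf : ∀ ξ : Fin d → F, (starRingEnd ℂ) (fhat χ f ξ)
      = N⁻¹ * ∑ y, (starRingEnd ℂ) (f y) * χ (dotProduct ξ y) := by
    intro ξ
    rw [fhat, _root_.map_mul, map_sum, map_inv₀, map_natCast, ← hN]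
    congr 1
    exact Finset.sum_congr rfl fun y _ => by rw [_root_.map_mul, hconj, neg_neg]
  have key : ∀ ξ y z : Fin d → F,
      (f y * χ (-(dotProduct ξ y))) * ((starRingEnd ℂ) (f z) * χ (dotProduct ξ z))
        = f y * (starRingEnd ℂ) (f z) * χ (dotProduct ξ (z - y)) := by
    intro ξ y z
    have h : dotProduct ξ (z - y) = -(dotProduct ξ y) + dotProduct ξ z := by
      rw [dotProduct_sub]; ring
    rw [h, AddChar.map_add_eq_mul]; ring
  calc ∑ ξ : Fin d → F, fhat χ f ξ * (starRingEnd ℂ) (fhat χ f ξ)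
      = ∑ ξ : Fin d → F, N⁻¹ * N⁻¹ *
          ∑ y, ∑ z, f y * (starRingEnd ℂ) (f z) * χ (dotProduct ξ (z - y)) := by
        refine Finset.sum_congr rfl fun ξ _ => ?_
        rw [hcf ξ]
        simp only [fhat, ← hN]
        rw [show (N⁻¹ * ∑ x, f x * χ (-(dotProduct ξ x))) *
              (N⁻¹ * ∑ y, (starRingEnd ℂ) (f y) * χ (dotProduct ξ y))
            = N⁻¹ * N⁻¹ * ((∑ x, f x * χ (-(dotProduct ξ x))) *
              ∑ y, (starRingEnd ℂ) (f y) * χ (dotProduct ξ y)) by ring]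
        rw [Finset.sum_mul_sum]
        exact congrArg _ (Finset.sum_congr rfl fun y _ =>
          Finset.sum_congr rfl fun z _ => key ξ y z)
    _ = N⁻¹ * N⁻¹ * ∑ y, ∑ z, f y * (starRingEnd ℂ) (f z) *
          ∑ ξ : Fin d → F, χ (dotProduct ξ (z - y)) := by
        rw [← Finset.mul_sum, Finset.sum_comm]
        congr 1
        refine Finset.sum_congr rfl fun y _ => ?_
        rw [Finset.sum_comm]
        exact Finset.sum_congr rfl fun z _ => (Finset.mul_sum _ _ _).symm
    _ = N⁻¹ * N⁻¹ * ∑ y, f y * (starRingEnd ℂ) (f y) * N := by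
        congr 1
        refine Finset.sum_congr rfl fun y _ => ?_
        simp_rw [char_orth χ hχ, sub_eq_zero, mul_ite, mul_zero]
        rw [Finset.sum_ite_eq' Finset.univ y
          (fun z => f y * (starRingEnd ℂ) (f z) * N), if_pos (Finset.mem_univ y)]
    _ = N⁻¹ * ∑ x, f x * (starRingEnd ℂ) (f x) := by
        rw [← Finset.sum_mul]
        field_simp
end helpers

/-- If the sphere measure `σ = q·1_{S_λ}` satisfies the Fourier bound
`|σ̂(ξ) − 1_{ξ=0}| ≤ C₀ q^{−1/2}`, then for a set `B` of density `β`, the convolution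
`μ_B * μ_B * σ` is `1 + O(β⁻¹ q^{−1/2})` at every point. -/
theorem stmt14 {F : Type*} [Field F] [Fintype F] [DecidableEq F] {d : ℕ} (hd : 2 ≤ d)
    (χ : AddChar F ℂ) (hχ : ∃ a, χ a ≠ 1)
    (lam : F) (hlam : lam ≠ 0)
    (σ : (Fin d → F) → ℂ)
    (hσdef : ∀ x, σ x = if dotProduct x x = lam then (Fintype.card F : ℂ) else 0)
    (C₀ : ℝ)
    (hσ : ∀ ξ : Fin d → F,
      ‖fhat χ σ ξ - if ξ = 0 then 1 else 0‖ ≤ C₀ / Real.sqrt (Fintype.card F))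
    (B : Finset (Fin d → F)) (hB : B.Nonempty)
    (β : ℝ) (hβ : β = (B.card : ℝ) / (Fintype.card (Fin d → F) : ℝ))
    (μB : (Fin d → F) → ℂ) (hμB : ∀ x, μB x = if x ∈ B then ((β : ℂ))⁻¹ else 0) :
    ∀ x : Fin d → F,
      ‖conv (conv μB μB) σ x - 1‖ ≤ C₀ * β⁻¹ / Real.sqrt (Fintype.card F) := by
  intro x
  have hχ1 : χ ≠ 1 := AddChar.ne_one_iff.mpr hχ
  set N : ℂ := (Fintype.card (Fin d → F) : ℂ) with hN
  have hNR0 : (0:ℝ) < (Fintype.card (Fin d → F) : ℝ) := by positivity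
  have hN0 : N ≠ 0 := Nat.cast_ne_zero.mpr Fintype.card_ne_zero
  have hβpos : 0 < β := by
    rw [hβ]
    have : 0 < B.card := Finset.card_pos.mpr hB
    positivity
  have hβC : (β:ℂ) ≠ 0 := Complex.ofReal_ne_zero.mpr (ne_of_gt hβpos)
  have hβN : (β:ℂ) * N = (B.card : ℂ) := by
    rw [hβ, hN]
    push_cast
    field_simp
  -- value of μ̂B at 0
  have hsum_μ : ∑ y, μB y = (B.card : ℂ) * ((β:ℂ))⁻¹ := by
    simp_rw [hμB]
    rw [Finset.sum_ite_mem, Finset.univ_inter, Finset.sum_const, nsmul_eq_mul]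
  have hμ0 : fhat χ μB 0 = 1 := by
    rw [fhat, ← hN]
    simp only [zero_dotProduct, neg_zero, AddChar.map_zero_eq_one, mul_one]
    rw [hsum_μ, ← hβN]
    field_simp
  -- Fourier representation of the triple convolution
  have hrep : conv (conv μB μB) σ x
      = ∑ ξ : Fin d → F, (fhat χ μB ξ * fhat χ μB ξ * fhat χ σ ξ) * χ (dotProduct ξ x) := by
    rw [← fourier_inv χ hχ1 (conv (conv μB μB) σ) x]
    exact Finset.sum_congr rfl fun ξ _ => by rw [fhat_conv, fhat_conv]
  have hone : (1:ℂ)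
      = ∑ ξ : Fin d → F, (fhat χ μB ξ * fhat χ μB ξ *
          (if ξ = 0 then 1 else 0)) * χ (dotProduct ξ x) := by
    have h : ∀ ξ : Fin d → F, (fhat χ μB ξ * fhat χ μB ξ *
        (if ξ = 0 then (1:ℂ) else 0)) * χ (dotProduct ξ x)
        = if ξ = 0 then (fhat χ μB 0 * fhat χ μB 0) * χ (dotProduct 0 x) else 0 := by
      intro ξ
      split_ifs with hh
      · subst hh; ring
      · ring
    simp_rw [h]
    rw [Finset.sum_ite_eq' Finset.univ (0 : Fin d → F)
      (fun _ => (fhat χ μB 0 * fhat χ μB 0) * χ (dotProduct (0 : Fin d → F) x)),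
      if_pos (Finset.mem_univ _)]
    simp [hμ0]
  have hdiff : conv (conv μB μB) σ x - 1
      = ∑ ξ : Fin d → F, (fhat χ μB ξ * fhat χ μB ξ *
          (fhat χ σ ξ - if ξ = 0 then 1 else 0)) * χ (dotProduct ξ x) := by
    rw [hrep]
    nth_rewrite 1 [hone]
    rw [← Finset.sum_sub_distrib]
    exact Finset.sum_congr rfl fun ξ _ => by ring
  -- Plancherel for μB
  have hplanch : ∑ ξ : Fin d → F, (‖fhat χ μB ξ‖)^2 = β⁻¹ := by
    have h1 := planch χ hχ1 μB
    have h2 : ∑ y, μB y * (starRingEnd ℂ) (μB y) = (B.card : ℂ) * (((β:ℂ))⁻¹)^2 := by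
      have hterm : ∀ y, μB y * (starRingEnd ℂ) (μB y)
          = if y ∈ B then (((β:ℂ))⁻¹)^2 else 0 := fun y => by
        rw [hμB]
        split_ifs with h
        · rw [map_inv₀, Complex.conj_ofReal]; ring
        · simp
      simp_rw [hterm]
      rw [Finset.sum_ite_mem, Finset.univ_inter, Finset.sum_const, nsmul_eq_mul]
    rw [h2, ← hN] at h1
    have h3 : (N:ℂ)⁻¹ * ((B.card : ℂ) * (((β:ℂ))⁻¹)^2) = ((β:ℂ))⁻¹ := by
      rw [← hβN]
      field_simp
    rw [h3] at h1
    have h4 : ∀ ξ : Fin d → F, fhat χ μB ξ * (starRingEnd ℂ) (fhat χ μB ξ)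
        = ((‖fhat χ μB ξ‖)^2 : ℝ) := fun ξ => by
      rw [Complex.mul_conj, Complex.sq_norm]
    rw [Finset.sum_congr rfl fun ξ _ => h4 ξ] at h1
    have := Complex.ofReal_inj.mp (by push_cast at h1 ⊢; exact h1 :
      ((∑ ξ : Fin d → F, (‖fhat χ μB ξ‖)^2 : ℝ) : ℂ) = ((β⁻¹ : ℝ) : ℂ))
    exact this
  -- final bound
  rw [hdiff]
  calc ‖∑ ξ : Fin d → F, (fhat χ μB ξ * fhat χ μB ξ *
          (fhat χ σ ξ - if ξ = 0 then 1 else 0)) * χ (dotProduct ξ x)‖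
      ≤ ∑ ξ : Fin d → F, ‖(fhat χ μB ξ * fhat χ μB ξ *
          (fhat χ σ ξ - if ξ = 0 then 1 else 0)) * χ (dotProduct ξ x)‖ := by
        exact norm_sum_le _ _
    _ ≤ ∑ ξ : Fin d → F, (‖fhat χ μB ξ‖)^2 *
          (C₀ / Real.sqrt (Fintype.card F)) := by
        refine Finset.sum_le_sum fun ξ _ => ?_
        rw [norm_mul, norm_mul, norm_mul]
        have habsχ : ‖χ (dotProduct ξ x)‖ = 1 := by
          exact AddChar.norm_apply χ _
        rw [habsχ, mul_one]
        have : ‖fhat χ μB ξ‖ * ‖fhat χ μB ξ‖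
            = (‖fhat χ μB ξ‖)^2 := (sq _).symm
        rw [this]
        exact mul_le_mul_of_nonneg_left (hσ ξ) (sq_nonneg _)
    _ = C₀ * β⁻¹ / Real.sqrt (Fintype.card F) := by
        rw [← Finset.sum_mul, hplanch]
        ring
end

section
/- Let X = {x_0, …, x_{k+1}} ⊆ F_q^d be a (k+2)-point set with x_{k+1} = x_0 + a_1(x_1−x_0) + ⋯ + a_k(x_k−x_0) for some a_i ∈ F_q, and suppose X spans k dimensions with x_1−x_0, …, x_k−x_0 linearly independent. If X is spherical and the (k+1)-point subset {x_0, …, x_k} is contained in a sphere S_λ(u), then x_{k+1} ∈ S_λ(u) as well, so X ⊆ S_λ(u). -/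
open Matrix

private lemma cross_lemma {F : Type*} [Field F] {d : ℕ} (p v : Fin d → F)
    (h : dotProduct (v + p) (v + p) = dotProduct p p) :
    dotProduct p v + dotProduct v p = - dotProduct v v := by
  simp only [dotProduct_add, add_dotProduct] at h
  linear_combination h

/-- Let `X = {x₀, y₁, …, y_k, x_last}` be a spherical `(k+2)`-point configuration in
`F_q^d` spanning `k` dimensions, with `x_last = x₀ + Σ aᵢ (yᵢ − x₀)` and
`y₁ − x₀, …, y_k − x₀` linearly independent.  If the `k+1` points `x₀, y₁, …, y_k` lie
on the sphere `S_λ(u)`, then so does `x_last`. -/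
theorem stmt16 {F : Type*} [Field F] [Fintype F] (hodd : ringChar F ≠ 2) {d k : ℕ}
    (x₀ xlast : Fin d → F) (y : Fin k → (Fin d → F)) (a : Fin k → F)
    (hlast : xlast = x₀ + ∑ i, a i • (y i - x₀))
    (hli : LinearIndependent F (fun i => y i - x₀))
    (hsph : ∃ (z : Fin d → F) (r : F),
      dotProduct (x₀ - z) (x₀ - z) = r ∧ (∀ i, dotProduct (y i - z) (y i - z) = r) ∧
        dotProduct (xlast - z) (xlast - z) = r)
    (u : Fin d → F) (lam : F)
    (h₀ : dotProduct (x₀ - u) (x₀ - u) = lam)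
    (hy : ∀ i, dotProduct (y i - u) (y i - u) = lam) :
    dotProduct (xlast - u) (xlast - u) = lam := by
  obtain ⟨z, r, hz0, hzy, hzl⟩ := hsph
  set v : Fin k → (Fin d → F) := fun i => y i - x₀ with hv
  set w : Fin d → F := ∑ i, a i • v i with hw
  have hyu : ∀ i, y i - u = v i + (x₀ - u) := by intro i; simp only [hv]; abel
  have hyz : ∀ i, y i - z = v i + (x₀ - z) := by intro i; simp only [hv]; abel
  have hxu : xlast - u = w + (x₀ - u) := by rw [hlast]; abel
  have hxz : xlast - z = w + (x₀ - z) := by rw [hlast]; abel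
  -- cross terms w.r.t. u
  have cu : ∀ i, dotProduct (x₀ - u) (v i) + dotProduct (v i) (x₀ - u)
      = - dotProduct (v i) (v i) := fun i =>
    cross_lemma _ _ (by rw [← hyu i, hy i, h₀])
  have cz : ∀ i, dotProduct (x₀ - z) (v i) + dotProduct (v i) (x₀ - z)
      = - dotProduct (v i) (v i) := fun i =>
    cross_lemma _ _ (by rw [← hyz i, hzy i, hz0])
  have cw : dotProduct (x₀ - z) w + dotProduct w (x₀ - z) = - dotProduct w w :=
    cross_lemma _ _ (by rw [← hxz, hzl, hz0])
  -- expand dot products with w as sums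
  have expand : ∀ c : Fin d → F, dotProduct c w + dotProduct w c
      = ∑ i, a i * (dotProduct c (v i) + dotProduct (v i) c) := by
    intro c
    simp only [hw, dotProduct, Finset.sum_apply, Pi.smul_apply, smul_eq_mul,
      Finset.mul_sum, Finset.sum_mul, mul_add]
    rw [Finset.sum_comm, Finset.sum_comm (γ := Fin d), ← Finset.sum_add_distrib]
    refine Finset.sum_congr rfl fun i _ => ?_
    congr 1 <;> exact Finset.sum_congr rfl fun j _ => by ring
  have hww : dotProduct w w = ∑ i, a i * dotProduct (v i) (v i) := by
    have := expand (x₀ - z)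
    rw [cw] at this
    have : dotProduct w w = - ∑ i, a i * (dotProduct (x₀ - z) (v i) + dotProduct (v i) (x₀ - z)) := by
      linear_combination -this
    rw [this]
    rw [← Finset.sum_neg_distrib]
    congr 1; ext i; rw [cz i]; ring
  have hcu : dotProduct (x₀ - u) w + dotProduct w (x₀ - u)
      = - ∑ i, a i * dotProduct (v i) (v i) := by
    rw [expand (x₀ - u), ← Finset.sum_neg_distrib]
    congr 1; ext i; rw [cu i]; ring
  rw [hxu]
  simp only [dotProduct_add, add_dotProduct]
  linear_combination hcu + hww + h₀
end

section
/- Let t ∈ F_q^* with |χ(t) − 1| ≥ 1/2, let c_0, …, c_k ∈ F_q, and let B = B({c_0,…,c_k}, 1/(4(k+1))) be the Bohr set in F_q (dimension 1). Define A = {x ∈ F_q^d : |x|² ∈ B}. Then A contains no tuple (y_0, …, y_k) ∈ (F_q^d)^{k+1} satisfying Σ_i c_i |y_i|² = t. -/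
open Matrix

lemma prod_sub_one_norm_le {ι : Type*} (s : Finset ι) (z : ι → ℂ)
    (hz : ∀ i ∈ s, ‖z i‖ = 1) :
    ‖∏ i ∈ s, z i - 1‖ ≤ ∑ i ∈ s, ‖z i - 1‖ := by
  classical
  induction s using Finset.induction_on with
  | empty => simp
  | @insert a s ha ih =>
    rw [Finset.prod_insert ha, Finset.sum_insert ha]
    have h1 : z a * ∏ i ∈ s, z i - 1 = z a * (∏ i ∈ s, z i - 1) + (z a - 1) := by ring
    rw [h1]
    calc ‖z a * (∏ i ∈ s, z i - 1) + (z a - 1)‖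
        ≤ ‖z a * (∏ i ∈ s, z i - 1)‖ + ‖z a - 1‖ := norm_add_le _ _
      _ = ‖∏ i ∈ s, z i - 1‖ + ‖z a - 1‖ := by
          rw [norm_mul, hz a (Finset.mem_insert_self a s), one_mul]
      _ ≤ (∑ i ∈ s, ‖z i - 1‖) + ‖z a - 1‖ := by
          gcongr
          exact ih fun i hi => hz i (Finset.mem_insert_of_mem hi)
      _ = ‖z a - 1‖ + ∑ i ∈ s, ‖z i - 1‖ := by ring

/-- Let `t ∈ F_q^*` with `|χ(t) − 1| ≥ 1/2` and `B = B({c₀,…,c_k}, 1/(4(k+1)))` the Bohr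
set in `F_q`.  Then `A = {x ∈ F_q^d : |x|² ∈ B}` contains no tuple `(y₀,…,y_k)` with
`Σ cᵢ |yᵢ|² = t`. -/
theorem stmt18 {F : Type*} [Field F] [Fintype F] {d k : ℕ}
    (χ : AddChar F ℂ) (t : F) (ht0 : t ≠ 0)
    (ht : 1 / 2 ≤ ‖χ t - 1‖)
    (c : Fin (k + 1) → F)
    (A : Set (Fin d → F))
    (hA : A = {x | ∀ j, ‖χ (c j * dotProduct x x) - 1‖ ≤ 1 / (4 * (k + 1))})
    (y : Fin (k + 1) → (Fin d → F)) (hy : ∀ i, y i ∈ A) :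
    ∑ i, c i * dotProduct (y i) (y i) ≠ t := by
  intro heq
  have hmap : χ t = ∏ i, χ (c i * dotProduct (y i) (y i)) := by
    rw [← heq]
    classical
    induction (Finset.univ : Finset (Fin (k+1))) using Finset.induction_on with
    | empty => simp
    | @insert a s ha ih =>
      rw [Finset.sum_insert ha, Finset.prod_insert ha, χ.map_add_eq_mul, ih]
  have hle : ‖χ t - 1‖ ≤ 1 / 4 := by
    rw [hmap]
    have := prod_sub_one_norm_le Finset.univ (fun i => χ (c i * dotProduct (y i) (y i)))
      (fun i _ => AddChar.norm_apply χ _)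
    refine le_trans this ?_
    have hb : ∀ i : Fin (k+1), ‖χ (c i * dotProduct (y i) (y i)) - 1‖ ≤ 1 / (4 * (k + 1)) := by
      intro i
      have := hy i
      rw [hA] at this
      exact this i
    calc ∑ i : Fin (k+1), ‖χ (c i * dotProduct (y i) (y i)) - 1‖
        ≤ ∑ _i : Fin (k+1), (1 / (4 * (k + 1)) : ℝ) := Finset.sum_le_sum fun i _ => hb i
      _ = (k + 1) * (1 / (4 * (k + 1))) := by simp [mul_comm]
      _ = 1 / 4 := by
          field_simp
  linarith [ht.trans hle]
end
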